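/- arXiv:2006.10798 — 8 statements merged into one kernel-verified Lean document; each statement's English description precedes it below -/
import Mathlib

section
/- For all positive real numbers a and b, the improper integral ∫₀^∞ x^{-3/2} exp(-b²/(a x)) dx equals √(πa)/b. -/
/-! The substitution `x = t⁻²` turns `x^(-3/2) e^(-c/x) dx` into `2 e^(-c t²) dt`, a half-line
Gaussian integral. -/

open MeasureTheory Real Set

lemma rpow_neg_three_halves_mul_exp_neg_div_comp_rpow_neg_two {c t : ℝ} (ht : 0 < t) :
    (|(-2 : ℝ)| * t ^ ((-2 : ℝ) - 1)) •
        ((t ^ (-2 : ℝ)) ^ (-(3 : ℝ) / 2) * exp (-c / t ^ (-2 : ℝ))) =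
      2 * exp (-c * t ^ 2) := by
  have hpow : (t ^ (-2 : ℝ)) ^ (-(3 : ℝ) / 2) = t ^ (3 : ℝ) := by
    rw [← rpow_mul ht.le]; norm_num
  have hjac : t ^ ((-2 : ℝ) - 1) = (t ^ (3 : ℝ))⁻¹ := by
    rw [show (-2 : ℝ) - 1 = -3 by norm_num, rpow_neg ht.le]
  have hexp : -c / t ^ (-2 : ℝ) = -c * t ^ 2 := by
    rw [rpow_neg ht.le, rpow_two, div_inv_eq_mul]
  have ht3 : t ^ (3 : ℝ) ≠ 0 := by positivity
  rw [smul_eq_mul, hpow, hjac, hexp, abs_neg, abs_two]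
  field_simp

/-- For `c ≤ 0` both sides are junk `0`: the integrand is not integrable and `√` of a
nonpositive number is `0`. -/
theorem integral_rpow_neg_three_halves_mul_exp_neg_div (c : ℝ) :
    ∫ x in Ioi (0 : ℝ), x ^ (-(3 : ℝ) / 2) * exp (-c / x) = √(π / c) := by
  rw [← integral_comp_rpow_Ioi _ (p := -2) (by norm_num),
    setIntegral_congr_fun measurableSet_Ioi
      fun t ht => rpow_neg_three_halves_mul_exp_neg_div_comp_rpow_neg_two ht,
    integral_const_mul, integral_gaussian_Ioi]
  ring

theorem stmt_0_general (a b : ℝ) (hb : 0 < b) :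
    ∫ x in Set.Ioi (0 : ℝ), x ^ (-(3 : ℝ)/2) * Real.exp (-b^2 / (a * x)) =
      Real.sqrt (π * a) / b := by
  have hexponent : ∀ x, -b ^ 2 / (a * x) = -(b ^ 2 / a) / x := fun x => by
    rw [neg_div, neg_div, div_div]
  simp_rw [hexponent]
  rw [integral_rpow_neg_three_halves_mul_exp_neg_div,
    div_div_eq_mul_div, sqrt_div' _ (sq_nonneg b), sqrt_sq hb.le]

theorem stmt_0 (a b : ℝ) (ha : 0 < a) (hb : 0 < b) :
    ∫ x in Set.Ioi (0 : ℝ), x ^ (-(3 : ℝ)/2) * Real.exp (-b^2 / (a * x)) =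
      Real.sqrt (π * a) / b :=
  stmt_0_general a b hb
end

section
/- Let k be a natural number and let ρ, t > 0 be real. If a ≥ ρt/2, then there exist positive constants c, C (depending only on k) with c · t^{1/2}((a − ρt/2)^k + t^{k/2}) e^{ρ²t/4 − aρ} ≤ ∫₀^∞ x^k e^{-(x−a)²/t − ρx} dx ≤ C · t^{1/2}((a − ρt/2)^k + t^{k/2}) e^{ρ²t/4 − aρ}. -/
/-!
Completing the square, `x ^ k * exp (-(x - a) ^ 2 / t - ρ * x)` is `exp (ρ ^ 2 * t / 4 - a * ρ)`
times `x ^ k * exp (-(x - β) ^ 2 / t)` with `β = a - ρ * t / 2 ≥ 0`, so it suffices to show that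
`∫₀^∞ x ^ k * exp (-(x - β) ^ 2 / t)` is comparable to `√t * (β ^ k + √t ^ k)`. On the interval
`(β + √t, β + 2√t]` of length `√t` the integrand is at least `exp (-4) * max β √t ^ k`, which gives
the lower bound. For the upper bound, `|x| ^ k ≤ 2 ^ (k - 1) * (|x - β| ^ k + |β| ^ k)`, and the
absolute moments of the Gaussian `exp (-u ^ 2 / t)` scale as `√t ^ (j + 1)`.
-/

open MeasureTheory Real Set

noncomputable def gaussianAbsMoment (k : ℕ) : ℝ := ∫ x : ℝ, |x| ^ k * exp (-x ^ 2)

lemma gaussianAbsMoment_nonneg (k : ℕ) : 0 ≤ gaussianAbsMoment k :=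
  integral_nonneg fun x => by positivity

lemma gaussianAbsMoment_zero : gaussianAbsMoment 0 = √π := by
  simpa [gaussianAbsMoment] using integral_gaussian 1

section GaussianMoments

variable {t : ℝ}

lemma integrable_abs_pow_mul_exp_neg_sq_div (ht : 0 < t) (k : ℕ) :
    Integrable fun x : ℝ => |x| ^ k * exp (-x ^ 2 / t) := by
  refine (integrable_rpow_mul_exp_neg_mul_sq (inv_pos.mpr ht)
    (s := k) (by linarith [k.cast_nonneg (α := ℝ)])).norm.congr (.of_forall fun x => ?_)
  simp [div_eq_inv_mul]

lemma integral_abs_pow_mul_exp_neg_sq_div (ht : 0 < t) (k : ℕ) :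
    ∫ x : ℝ, |x| ^ k * exp (-x ^ 2 / t) = √t ^ (k + 1) * gaussianAbsMoment k := by
  have hs : 0 < √t := sqrt_pos.mpr ht
  have hscale : ∀ x : ℝ, |√t * x| ^ k * exp (-(√t * x) ^ 2 / t)
      = √t ^ k * (|x| ^ k * exp (-x ^ 2)) := by
    intro x
    rw [abs_mul, abs_of_pos hs, mul_pow, mul_pow, sq_sqrt ht.le, mul_comm t, neg_div,
      mul_div_assoc, div_self ht.ne', mul_one]
    ring
  have h := Measure.integral_comp_mul_left (fun y : ℝ => |y| ^ k * exp (-y ^ 2 / t)) √t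
  simp only [hscale, integral_const_mul, abs_inv, abs_of_pos hs, smul_eq_mul] at h
  rw [gaussianAbsMoment, pow_succ, mul_comm _ √t, mul_assoc, h, ← mul_assoc,
    mul_inv_cancel₀ hs.ne', one_mul]

end GaussianMoments

lemma abs_pow_le_two_pow_mul_abs_sub_pow_add (x β : ℝ) (k : ℕ) :
    |x| ^ k ≤ 2 ^ (k - 1) * (|x - β| ^ k + |β| ^ k) := by
  have hx : |x| ≤ |x - β| + |β| := by linarith [abs_sub_abs_le_abs_sub x β]
  exact (pow_le_pow_left₀ (abs_nonneg x) hx k).trans (add_pow_le (abs_nonneg _) (abs_nonneg _) k)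

section ShiftedGaussian

variable {t : ℝ} (β : ℝ)

lemma integrable_abs_sub_pow_add_mul_exp (ht : 0 < t) (k : ℕ) :
    Integrable fun x : ℝ => (|x - β| ^ k + |β| ^ k) * exp (-(x - β) ^ 2 / t) := by
  have h0 := ((integrable_abs_pow_mul_exp_neg_sq_div ht 0).comp_sub_right β).const_mul (|β| ^ k)
  refine ((integrable_abs_pow_mul_exp_neg_sq_div ht k).comp_sub_right β).add h0 |>.congr
    (.of_forall fun x => ?_)
  simp only [Pi.add_apply, pow_zero, one_mul]
  ring

lemma integral_abs_sub_pow_add_mul_exp (ht : 0 < t) (k : ℕ) :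
    ∫ x : ℝ, (|x - β| ^ k + |β| ^ k) * exp (-(x - β) ^ 2 / t)
      = √t ^ (k + 1) * gaussianAbsMoment k + |β| ^ k * (√t * gaussianAbsMoment 0) := by
  have hk := integrable_abs_pow_mul_exp_neg_sq_div ht k
  have h0 : Integrable fun x : ℝ => exp (-(x - β) ^ 2 / t) := by
    simpa using (integrable_abs_pow_mul_exp_neg_sq_div ht 0).comp_sub_right β
  simp only [add_mul]
  rw [integral_add (hk.comp_sub_right β) (h0.const_mul _), integral_const_mul,
    integral_sub_right_eq_self (fun x => |x| ^ k * exp (-x ^ 2 / t)),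
    integral_sub_right_eq_self (fun x => exp (-x ^ 2 / t)),
    integral_abs_pow_mul_exp_neg_sq_div ht k]
  simpa using congrArg (|β| ^ k * ·) (integral_abs_pow_mul_exp_neg_sq_div ht 0)

lemma pow_mul_exp_le_two_pow_mul (x : ℝ) (k : ℕ) :
    x ^ k * exp (-(x - β) ^ 2 / t)
      ≤ 2 ^ (k - 1) * ((|x - β| ^ k + |β| ^ k) * exp (-(x - β) ^ 2 / t)) := by
  rw [← mul_assoc]
  gcongr
  calc x ^ k ≤ |x| ^ k := (le_abs_self _).trans (abs_pow x k).le
    _ ≤ _ := abs_pow_le_two_pow_mul_abs_sub_pow_add x β k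

lemma integrable_pow_mul_exp_neg_sub_sq_div (ht : 0 < t) (k : ℕ) :
    Integrable fun x : ℝ => x ^ k * exp (-(x - β) ^ 2 / t) := by
  refine ((integrable_abs_sub_pow_add_mul_exp β ht k).const_mul (2 ^ (k - 1))).mono'
    (by fun_prop) (.of_forall fun x => ?_)
  rw [norm_mul, norm_pow, norm_of_nonneg (exp_pos _).le, ← mul_assoc]
  gcongr
  exact abs_pow_le_two_pow_mul_abs_sub_pow_add x β k

lemma setIntegral_Ioi_pow_mul_exp_le (ht : 0 < t) (k : ℕ) :
    ∫ x in Ioi 0, x ^ k * exp (-(x - β) ^ 2 / t)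
      ≤ 2 ^ (k - 1) * (gaussianAbsMoment k + √π) * (√t * (|β| ^ k + √t ^ k)) := by
  have hg := (integrable_abs_sub_pow_add_mul_exp β ht k).const_mul (2 ^ (k - 1))
  calc ∫ x in Ioi 0, x ^ k * exp (-(x - β) ^ 2 / t)
      ≤ ∫ x in Ioi 0, 2 ^ (k - 1) * ((|x - β| ^ k + |β| ^ k) * exp (-(x - β) ^ 2 / t)) :=
        setIntegral_mono (integrable_pow_mul_exp_neg_sub_sq_div β ht k).integrableOn
          hg.integrableOn (pow_mul_exp_le_two_pow_mul β · k)
    _ ≤ ∫ x, 2 ^ (k - 1) * ((|x - β| ^ k + |β| ^ k) * exp (-(x - β) ^ 2 / t)) :=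
        setIntegral_le_integral hg (.of_forall fun x => by positivity)
    _ = 2 ^ (k - 1) * (√t * √t ^ k * gaussianAbsMoment k + |β| ^ k * (√t * √π)) := by
        rw [integral_const_mul, integral_abs_sub_pow_add_mul_exp β ht k, gaussianAbsMoment_zero,
          pow_succ']
    _ ≤ _ := by
        have hM := gaussianAbsMoment_nonneg k
        have hs := sqrt_nonneg t
        nlinarith [mul_nonneg (mul_nonneg (pow_nonneg zero_le_two (k - 1)) hs)
          (add_nonneg (mul_nonneg hM (pow_nonneg (abs_nonneg β) k))
            (mul_nonneg (sqrt_nonneg π) (pow_nonneg hs k)))]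

lemma le_setIntegral_Ioi_pow_mul_exp (hβ : 0 ≤ β) (ht : 0 < t) (k : ℕ) :
    exp (-4) / 2 * (√t * (β ^ k + √t ^ k)) ≤ ∫ x in Ioi 0, x ^ k * exp (-(x - β) ^ 2 / t) := by
  set s := √t
  have hs : 0 < s := sqrt_pos.mpr ht
  have hbound : ∀ x ∈ Ioc (β + s) (β + 2 * s),
      exp (-4) * ((β ^ k + s ^ k) / 2) ≤ x ^ k * exp (-(x - β) ^ 2 / t) := by
    rintro x ⟨hx₁, hx₂⟩
    have hpow : (β ^ k + s ^ k) / 2 ≤ x ^ k := by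
      have := pow_le_pow_left₀ hβ (by linarith : β ≤ x) k
      have := pow_le_pow_left₀ hs.le (by linarith : s ≤ x) k
      linarith
    have hexp : exp (-4) ≤ exp (-(x - β) ^ 2 / t) := by
      rw [exp_le_exp, neg_div, neg_le_neg_iff, div_le_iff₀ ht]
      nlinarith [sq_sqrt ht.le]
    rw [mul_comm (x ^ k)]
    exact mul_le_mul hexp hpow (by positivity) (exp_pos _).le
  have hf := (integrable_pow_mul_exp_neg_sub_sq_div β ht k).integrableOn (s := Ioi 0)
  calc exp (-4) / 2 * (s * (β ^ k + s ^ k))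
      = exp (-4) * ((β ^ k + s ^ k) / 2) * volume.real (Ioc (β + s) (β + 2 * s)) := by
        rw [measureReal_def, Real.volume_Ioc, ENNReal.toReal_ofReal (by linarith)]
        ring
    _ ≤ ∫ x in Ioc (β + s) (β + 2 * s), x ^ k * exp (-(x - β) ^ 2 / t) :=
        setIntegral_ge_of_const_le_real measurableSet_Ioc measure_Ioc_lt_top.ne hbound
          (integrable_pow_mul_exp_neg_sub_sq_div β ht k).integrableOn
    _ ≤ ∫ x in Ioi 0, x ^ k * exp (-(x - β) ^ 2 / t) := by
        refine setIntegral_mono_set hf ?_ (.of_forall fun x hx => ?_)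
        · filter_upwards [ae_restrict_mem measurableSet_Ioi] with x (hx : 0 < x)
          positivity
        · exact (show (0 : ℝ) < x by nlinarith [hx.1])

end ShiftedGaussian

lemma neg_sq_div_sub_mul_eq {t : ℝ} (ht : t ≠ 0) (a ρ x : ℝ) :
    -(x - a) ^ 2 / t - ρ * x = (ρ ^ 2 * t / 4 - a * ρ) + -(x - (a - ρ * t / 2)) ^ 2 / t := by
  field_simp
  ring

lemma setIntegral_Ioi_pow_mul_exp_eq {t : ℝ} (ht : t ≠ 0) (k : ℕ) (a ρ : ℝ) :
    ∫ x in Ioi 0, x ^ k * exp (-(x - a) ^ 2 / t - ρ * x)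
      = exp (ρ ^ 2 * t / 4 - a * ρ)
        * ∫ x in Ioi 0, x ^ k * exp (-(x - (a - ρ * t / 2)) ^ 2 / t) := by
  simp_rw [neg_sq_div_sub_mul_eq ht, exp_add, ← integral_const_mul, mul_left_comm]

theorem stmt_5 (k : ℕ) :
    ∃ c C : ℝ, 0 < c ∧ 0 < C ∧
      ∀ ρ t a : ℝ, 0 < ρ → 0 < t → ρ * t / 2 ≤ a →
        c * (t ^ ((1 : ℝ)/2) * ((a - ρ*t/2)^k + t ^ ((k : ℝ)/2)) *
            Real.exp (ρ^2 * t / 4 - a * ρ)) ≤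
          (∫ x in Set.Ioi (0 : ℝ), x^k * Real.exp (-(x - a)^2 / t - ρ * x)) ∧
        (∫ x in Set.Ioi (0 : ℝ), x^k * Real.exp (-(x - a)^2 / t - ρ * x)) ≤
          C * (t ^ ((1 : ℝ)/2) * ((a - ρ*t/2)^k + t ^ ((k : ℝ)/2)) *
            Real.exp (ρ^2 * t / 4 - a * ρ)) := by
  have hM := gaussianAbsMoment_nonneg k
  refine ⟨exp (-4) / 2, 2 ^ (k - 1) * (gaussianAbsMoment k + √π), by positivity, by positivity,
    fun ρ t a _ ht ha => ?_⟩
  have hβ : 0 ≤ a - ρ * t / 2 := by linarith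
  have hE := exp_pos (ρ ^ 2 * t / 4 - a * ρ)
  have hlo := le_setIntegral_Ioi_pow_mul_exp _ hβ ht k
  have hhi := setIntegral_Ioi_pow_mul_exp_le (a - ρ * t / 2) ht k
  rw [abs_of_nonneg hβ] at hhi
  rw [setIntegral_Ioi_pow_mul_exp_eq ht.ne', ← sqrt_eq_rpow, rpow_div_two_eq_sqrt _ ht.le,
    rpow_natCast]
  exact ⟨(mul_le_mul_of_nonneg_left hlo hE.le).trans_eq' (by ring),
    (mul_le_mul_of_nonneg_left hhi hE.le).trans_eq (by ring)⟩
end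

section
/- Let k be a natural number and let ρ, t > 0 be real. If a < ρt/2, then there exist positive constants c, C (depending only on k) with c · t^{k+1}/((ρt/2 − a)^{k+1} + t^{(k+1)/2}) · e^{-a²/t} ≤ ∫₀^∞ x^k e^{-(x−a)²/t − ρx} dx ≤ C · t^{k+1}/((ρt/2 − a)^{k+1} + t^{(k+1)/2}) · e^{-a²/t}. -/
/-!
Completing the square, `-(x - a)²/t - ρx = -a²/t - (x² + 2βx)/t` with `β = ρt/2 - a > 0`, so it
suffices to bound `∫₀^∞ xᵏ e^{-(x² + 2βx)/t} dx` above and below by multiples of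
`t^{k+1} / (β^{k+1} + t^{(k+1)/2})`. Since `x² - √t x + t ≥ 0`, the integrand is at most
`e · xᵏ e^{-(2β + √t)x/t}`, a Gamma integral equal to `e k! (t/(2β + √t))^{k+1}`. Conversely, on
`(0, t / max β √t]` the exponent is at least `-3`, giving `e⁻³ (t / max β √t)^{k+1} / (k+1)`. Both
`2β + √t` and `max β √t` are comparable to `(β^{k+1} + t^{(k+1)/2})^{1/(k+1)}`.
-/

open MeasureTheory Real Set
open scoped Nat

lemma integral_pow_mul_exp_neg_mul_Ioi (k : ℕ) {b : ℝ} (hb : 0 < b) :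
    ∫ x in Ioi (0 : ℝ), x ^ k * exp (-(b * x)) = k ! / b ^ (k + 1) := by
  have h := integral_rpow_mul_exp_neg_mul_Ioi (a := k + 1) (by positivity) hb
  simp only [add_sub_cancel_right, rpow_natCast] at h
  rw [h, Gamma_nat_eq_factorial, ← Nat.cast_succ, rpow_natCast, one_div, inv_pow,
    inv_mul_eq_div]

lemma integrableOn_pow_mul_exp_neg_mul_Ioi (k : ℕ) {b : ℝ} (hb : 0 < b) :
    IntegrableOn (fun x : ℝ => x ^ k * exp (-(b * x))) (Ioi 0) :=
  .of_integral_ne_zero (by rw [integral_pow_mul_exp_neg_mul_Ioi k hb]; positivity)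

lemma rpow_succ_div_two_eq_sqrt_pow (k : ℕ) {t : ℝ} (ht : 0 ≤ t) :
    t ^ (((k : ℝ) + 1) / 2) = √t ^ (k + 1) := by
  rw [rpow_div_two_eq_sqrt _ ht, ← rpow_natCast]
  push_cast
  rfl

section

variable {β t : ℝ}

lemma exp_neg_sq_add_mul_le (ht : 0 < t) (x : ℝ) :
    exp (-(x ^ 2 + 2 * β * x) / t) ≤ exp 1 * exp (-((2 * β + √t) / t * x)) := by
  rw [← exp_add, exp_le_exp]
  field_simp
  nlinarith [sq_nonneg (x - √t / 2), sq_sqrt ht.le]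

lemma exp_neg_three_le_exp_neg_sq_add_mul (ht : 0 < t) {x : ℝ} (hx : x ^ 2 ≤ t)
    (hβx : β * x ≤ t) : exp (-3) ≤ exp (-(x ^ 2 + 2 * β * x) / t) := by
  rw [exp_le_exp, le_div_iff₀ ht]
  linarith

lemma integrableOn_pow_mul_exp_neg_sq_add_mul (k : ℕ) (hβ : 0 ≤ β) (ht : 0 < t) :
    IntegrableOn (fun x : ℝ => x ^ k * exp (-(x ^ 2 + 2 * β * x) / t)) (Ioi 0) := by
  have hb : 0 < (2 * β + √t) / t := by positivity
  refine ((integrableOn_pow_mul_exp_neg_mul_Ioi k hb).const_mul (exp 1)).mono' ?_ ?_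
  · exact (by fun_prop : Continuous _).aestronglyMeasurable
  · filter_upwards [ae_restrict_mem measurableSet_Ioi] with x (hx : 0 < x)
    rw [norm_of_nonneg (by positivity), mul_left_comm]
    exact mul_le_mul_of_nonneg_left (exp_neg_sq_add_mul_le ht x) (by positivity)

lemma setIntegral_pow_mul_exp_neg_sq_add_mul_le_div_pow (k : ℕ) (hβ : 0 ≤ β) (ht : 0 < t) :
    ∫ x in Ioi (0 : ℝ), x ^ k * exp (-(x ^ 2 + 2 * β * x) / t)
      ≤ exp 1 * k ! * (t / (2 * β + √t)) ^ (k + 1) := by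
  have hb : 0 < (2 * β + √t) / t := by positivity
  calc ∫ x in Ioi (0 : ℝ), x ^ k * exp (-(x ^ 2 + 2 * β * x) / t)
      ≤ ∫ x in Ioi (0 : ℝ), exp 1 * (x ^ k * exp (-((2 * β + √t) / t * x))) := by
        refine setIntegral_mono_on (integrableOn_pow_mul_exp_neg_sq_add_mul k hβ ht)
          ((integrableOn_pow_mul_exp_neg_mul_Ioi k hb).const_mul _) measurableSet_Ioi
          fun x (hx : 0 < x) => ?_
        rw [mul_left_comm]
        exact mul_le_mul_of_nonneg_left (exp_neg_sq_add_mul_le ht x) (by positivity)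
    _ = exp 1 * k ! * (t / (2 * β + √t)) ^ (k + 1) := by
        rw [integral_const_mul, integral_pow_mul_exp_neg_mul_Ioi k hb, ← inv_div (2 * β + √t),
          inv_pow, div_eq_mul_inv, mul_assoc]

lemma div_pow_le_setIntegral_pow_mul_exp_neg_sq_add_mul (k : ℕ) (hβ : 0 ≤ β) (ht : 0 < t) :
    exp (-3) / (k + 1) * (t / max β √t) ^ (k + 1)
      ≤ ∫ x in Ioi (0 : ℝ), x ^ k * exp (-(x ^ 2 + 2 * β * x) / t) := by
  set m := max β √t
  have hm : 0 < m := lt_max_of_lt_right (sqrt_pos.2 ht)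
  have hs : 0 < t / m := div_pos ht hm
  have hlow : ∀ x ∈ Ioc 0 (t / m),
      exp (-3) * x ^ k ≤ x ^ k * exp (-(x ^ 2 + 2 * β * x) / t) := by
    intro x ⟨hx0, hxs⟩
    have hmx : m * x ≤ t := (le_div_iff₀' hm).1 hxs
    have hsx : √t * x ≤ t := (mul_le_mul_of_nonneg_right (le_max_right _ _) hx0.le).trans hmx
    have hx : x ^ 2 ≤ t := by nlinarith [sq_sqrt ht.le, sqrt_pos.2 ht]
    rw [mul_comm]
    refine mul_le_mul_of_nonneg_left (exp_neg_three_le_exp_neg_sq_add_mul ht hx ?_) (by positivity)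
    nlinarith [le_max_left β √t]
  calc exp (-3) / (k + 1) * (t / m) ^ (k + 1)
      = ∫ x in Ioc 0 (t / m), exp (-3) * x ^ k := by
        rw [integral_const_mul, ← intervalIntegral.integral_of_le hs.le, integral_pow]
        rw [zero_pow k.succ_ne_zero, sub_zero]
        ring
    _ ≤ ∫ x in Ioc 0 (t / m), x ^ k * exp (-(x ^ 2 + 2 * β * x) / t) :=
        setIntegral_mono_on (Continuous.integrableOn_Ioc (by fun_prop))
          ((integrableOn_pow_mul_exp_neg_sq_add_mul k hβ ht).mono_set Ioc_subset_Ioi_self)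
          measurableSet_Ioc hlow
    _ ≤ ∫ x in Ioi (0 : ℝ), x ^ k * exp (-(x ^ 2 + 2 * β * x) / t) := by
        refine setIntegral_mono_set (integrableOn_pow_mul_exp_neg_sq_add_mul k hβ ht) ?_
          Ioc_subset_Ioi_self.eventuallyLE
        filter_upwards [ae_restrict_mem measurableSet_Ioi] with x (hx : 0 < x)
        positivity

lemma le_setIntegral_pow_mul_exp_neg_sq_add_mul (k : ℕ) (hβ : 0 ≤ β) (ht : 0 < t) :
    exp (-3) / (k + 1) * (t ^ (k + 1) / (β ^ (k + 1) + t ^ (((k : ℝ) + 1) / 2)))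
      ≤ ∫ x in Ioi (0 : ℝ), x ^ k * exp (-(x ^ 2 + 2 * β * x) / t) := by
  refine le_trans ?_ (div_pow_le_setIntegral_pow_mul_exp_neg_sq_add_mul k hβ ht)
  rw [div_pow, rpow_succ_div_two_eq_sqrt_pow k ht.le]
  gcongr
  rcases max_choice β √t with h | h <;> rw [h] <;>
    linarith [pow_nonneg hβ (k + 1), pow_nonneg (sqrt_nonneg t) (k + 1)]

lemma setIntegral_pow_mul_exp_neg_sq_add_mul_le (k : ℕ) (hβ : 0 ≤ β) (ht : 0 < t) :
    ∫ x in Ioi (0 : ℝ), x ^ k * exp (-(x ^ 2 + 2 * β * x) / t)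
      ≤ 2 * exp 1 * k ! * (t ^ (k + 1) / (β ^ (k + 1) + t ^ (((k : ℝ) + 1) / 2))) := by
  refine (setIntegral_pow_mul_exp_neg_sq_add_mul_le_div_pow k hβ ht).trans ?_
  have hβle : β ^ (k + 1) ≤ (2 * β + √t) ^ (k + 1) := by gcongr; linarith [sqrt_nonneg t]
  have hsqrtle : √t ^ (k + 1) ≤ (2 * β + √t) ^ (k + 1) := by gcongr; linarith
  have hD : 0 < β ^ (k + 1) + √t ^ (k + 1) := by positivity
  have hfrac : t ^ (k + 1) / (2 * β + √t) ^ (k + 1)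
      ≤ 2 * (t ^ (k + 1) / (β ^ (k + 1) + √t ^ (k + 1))) := by
    rw [mul_div_assoc', div_le_div_iff₀ (by positivity) hD]
    nlinarith [pow_pos ht (k + 1)]
  rw [rpow_succ_div_two_eq_sqrt_pow k ht.le, div_pow]
  calc exp 1 * k ! * (t ^ (k + 1) / (2 * β + √t) ^ (k + 1))
      ≤ exp 1 * k ! * (2 * (t ^ (k + 1) / (β ^ (k + 1) + √t ^ (k + 1)))) := by gcongr
    _ = _ := by ring

end

theorem stmt_6 (k : ℕ) :
    ∃ c C : ℝ, 0 < c ∧ 0 < C ∧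
      ∀ ρ t a : ℝ, 0 < ρ → 0 < t → a < ρ * t / 2 →
        c * (t^(k+1) / ((ρ*t/2 - a)^(k+1) + t ^ (((k : ℝ)+1)/2)) *
            Real.exp (-a^2 / t)) ≤
          (∫ x in Set.Ioi (0 : ℝ), x^k * Real.exp (-(x - a)^2 / t - ρ * x)) ∧
        (∫ x in Set.Ioi (0 : ℝ), x^k * Real.exp (-(x - a)^2 / t - ρ * x)) ≤
          C * (t^(k+1) / ((ρ*t/2 - a)^(k+1) + t ^ (((k : ℝ)+1)/2)) *
            Real.exp (-a^2 / t)) := by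
  refine ⟨exp (-3) / (k + 1), 2 * exp 1 * k !, by positivity, by positivity,
    fun ρ t a _ ht ha => ?_⟩
  set β := ρ * t / 2 - a
  have hβ : 0 ≤ β := sub_nonneg.2 ha.le
  have hsplit : ∀ x : ℝ, x ^ k * exp (-(x - a) ^ 2 / t - ρ * x)
      = exp (-a ^ 2 / t) * (x ^ k * exp (-(x ^ 2 + 2 * β * x) / t)) := by
    intro x
    rw [mul_left_comm, ← exp_add]
    congr 2
    field_simp
    ring
  simp_rw [hsplit, integral_const_mul, ← mul_assoc, mul_comm _ (exp (-a ^ 2 / t))]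
  have hE := (exp_pos (-a ^ 2 / t)).le
  exact ⟨mul_le_mul_of_nonneg_left (le_setIntegral_pow_mul_exp_neg_sq_add_mul k hβ ht) hE,
    mul_le_mul_of_nonneg_left (setIntegral_pow_mul_exp_neg_sq_add_mul_le k hβ ht) hE⟩
end

section
/- For every natural number k and all real b ≥ 0 and t > 0, there exist positive constants c, C (depending only on k) such that c · t^{1/2}(t^{k/2} + b^k) ≤ ∫₀^∞ y^k e^{-(y−b)²/t} dy ≤ C · t^{1/2}(t^{k/2} + b^k). -/
open MeasureTheory Real Set

/-! Write `t = s²`. Since `y ≤ b + |y - b| ≤ max b s * (1 + |v|)` with `v = (y - b) / s`, the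
integrand is at most `(s ^ k + b ^ k)` times the fixed integrable weight
`(1 + |v|) ^ k * exp (-v ^ 2)`, and the substitution `y = b + s v` contributes the factor `s`.
Conversely, on the window `b + s < y ≤ b + 2 s` of length `s` the integrand is at least
`(b + s) ^ k * exp (-4) ≥ (s ^ k + b ^ k) * exp (-4) / 2`. -/

noncomputable def polyGaussian (k : ℕ) (v : ℝ) : ℝ := (1 + |v|) ^ k * exp (-v ^ 2)

lemma integrable_exp_neg_sq : Integrable fun v : ℝ => exp (-v ^ 2) := by
  simpa using integrable_exp_neg_mul_sq one_pos

lemma integrable_polyGaussian (k : ℕ) : Integrable (polyGaussian k) := by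
  have hpow : Integrable fun v : ℝ => |v| ^ k * exp (-v ^ 2) := by
    have hk : (-1 : ℝ) < k := by linarith [k.cast_nonneg (α := ℝ)]
    simpa [abs_mul, abs_pow, rpow_natCast] using
      (integrable_rpow_mul_exp_neg_mul_sq one_pos hk).abs
  refine ((integrable_exp_neg_sq.add hpow).const_mul (2 ^ (k - 1))).mono'
    (by unfold polyGaussian; fun_prop) (ae_of_all _ fun v => ?_)
  rw [polyGaussian, norm_of_nonneg (by positivity), Pi.add_apply, ← one_add_mul, ← mul_assoc]
  gcongr
  simpa using add_pow_le zero_le_one (abs_nonneg v) k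

lemma integral_polyGaussian_pos (k : ℕ) : 0 < ∫ v, polyGaussian k v := by
  calc (0 : ℝ) < √π := by positivity
    _ = ∫ v : ℝ, exp (-v ^ 2) := by simpa using (integral_gaussian 1).symm
    _ ≤ ∫ v, polyGaussian k v :=
      integral_mono integrable_exp_neg_sq (integrable_polyGaussian k) fun v =>
        le_mul_of_one_le_left (exp_pos _).le (one_le_pow₀ (by simp))

lemma integral_polyGaussian_comp_div_sub {s : ℝ} (hs : 0 < s) (k : ℕ) (b : ℝ) :
    ∫ y, polyGaussian k ((y - b) / s) = s * ∫ v, polyGaussian k v := by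
  rw [integral_sub_right_eq_self (fun y => polyGaussian k (y / s)), Measure.integral_comp_div,
    abs_of_pos hs, smul_eq_mul]

lemma max_pow_le_pow_add_pow {a c : ℝ} (ha : 0 ≤ a) (hc : 0 ≤ c) (k : ℕ) :
    max a c ^ k ≤ a ^ k + c ^ k := by
  rcases max_choice a c with h | h <;> rw [h] <;> linarith [pow_nonneg ha k, pow_nonneg hc k]

lemma abs_pow_mul_exp_le_polyGaussian (k : ℕ) {b s : ℝ} (hb : 0 ≤ b) (hs : 0 < s) (y : ℝ) :
    |y ^ k * exp (-(y - b) ^ 2 / s ^ 2)| ≤ (s ^ k + b ^ k) * polyGaussian k ((y - b) / s) := by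
  have hy : |y| ≤ max b s * (1 + |(y - b) / s|) := by
    rw [abs_div, abs_of_pos hs, mul_one_add]
    calc |y| ≤ b + |y - b| := by simpa [abs_of_nonneg hb] using abs_add_le b (y - b)
      _ ≤ max b s + max b s * (|y - b| / s) := by
        gcongr
        · exact le_max_left b s
        · rw [← mul_div_assoc, le_div_iff₀ hs, mul_comm]
          gcongr
          exact le_max_right b s
  rw [abs_mul, abs_pow, abs_of_pos (exp_pos _), polyGaussian, div_pow, neg_div, ← mul_assoc]
  gcongr
  calc |y| ^ k ≤ (max b s * (1 + |(y - b) / s|)) ^ k := by gcongr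
    _ ≤ (s ^ k + b ^ k) * (1 + |(y - b) / s|) ^ k := by
      rw [mul_pow, add_comm (s ^ k)]
      gcongr
      exact max_pow_le_pow_add_pow hb hs.le k

lemma integrable_mul_polyGaussian_comp_div_sub (k : ℕ) (c b : ℝ) {s : ℝ} (hs : s ≠ 0) :
    Integrable fun y => c * polyGaussian k ((y - b) / s) :=
  (((integrable_polyGaussian k).comp_div hs).comp_sub_right b).const_mul c

lemma integrable_pow_mul_exp (k : ℕ) {b s : ℝ} (hb : 0 ≤ b) (hs : 0 < s) :
    Integrable fun y : ℝ => y ^ k * exp (-(y - b) ^ 2 / s ^ 2) := by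
  have hdom := integrable_mul_polyGaussian_comp_div_sub k (s ^ k + b ^ k) b hs.ne'
  exact hdom.mono' (by fun_prop) (ae_of_all _ (abs_pow_mul_exp_le_polyGaussian k hb hs))

lemma setIntegral_pow_mul_exp_le (k : ℕ) {b s : ℝ} (hb : 0 ≤ b) (hs : 0 < s) :
    ∫ y in Ioi 0, y ^ k * exp (-(y - b) ^ 2 / s ^ 2) ≤
      (∫ v, polyGaussian k v) * (s * (s ^ k + b ^ k)) := by
  have hdom := integrable_mul_polyGaussian_comp_div_sub k (s ^ k + b ^ k) b hs.ne'
  calc ∫ y in Ioi 0, y ^ k * exp (-(y - b) ^ 2 / s ^ 2)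
      ≤ ∫ y in Ioi 0, (s ^ k + b ^ k) * polyGaussian k ((y - b) / s) :=
        setIntegral_mono (integrable_pow_mul_exp k hb hs).integrableOn hdom.integrableOn
          fun y => (le_abs_self _).trans (abs_pow_mul_exp_le_polyGaussian k hb hs y)
    _ ≤ ∫ y, (s ^ k + b ^ k) * polyGaussian k ((y - b) / s) :=
        setIntegral_le_integral hdom (ae_of_all _ fun y => by unfold polyGaussian; positivity)
    _ = (∫ v, polyGaussian k v) * (s * (s ^ k + b ^ k)) := by
        rw [integral_const_mul, integral_polyGaussian_comp_div_sub hs]; ring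

lemma le_setIntegral_pow_mul_exp (k : ℕ) {b s : ℝ} (hb : 0 ≤ b) (hs : 0 < s) :
    exp (-4) / 2 * (s * (s ^ k + b ^ k)) ≤
      ∫ y in Ioi 0, y ^ k * exp (-(y - b) ^ 2 / s ^ 2) := by
  have hf := integrable_pow_mul_exp k hb hs
  have hbs : 0 < b + s := by linarith
  have hbump : ∀ y ∈ Ioc (b + s) (b + 2 * s),
      (b + s) ^ k * exp (-4) ≤ y ^ k * exp (-(y - b) ^ 2 / s ^ 2) := by
    rintro y ⟨hy₁, hy₂⟩
    have hy : 0 < y := hbs.trans hy₁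
    gcongr
    rw [neg_div, neg_le_neg_iff, div_le_iff₀ (by positivity)]
    nlinarith
  calc exp (-4) / 2 * (s * (s ^ k + b ^ k))
      ≤ s * ((b + s) ^ k * exp (-4)) := by
        have : s ^ k + b ^ k ≤ 2 * (b + s) ^ k := by
          linarith [pow_le_pow_left₀ hs.le (le_add_of_nonneg_left hb) k,
            pow_le_pow_left₀ hb (le_add_of_nonneg_right hs.le) k]
        have := mul_le_mul_of_nonneg_left this (mul_nonneg hs.le (exp_pos (-4)).le)
        linarith
    _ = ∫ _ in Ioc (b + s) (b + 2 * s), (b + s) ^ k * exp (-4) := by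
        rw [setIntegral_const, measureReal_def, volume_Ioc, smul_eq_mul,
          ENNReal.toReal_ofReal (by linarith)]
        ring
    _ ≤ ∫ y in Ioc (b + s) (b + 2 * s), y ^ k * exp (-(y - b) ^ 2 / s ^ 2) :=
        setIntegral_mono_on (integrableOn_const (by simp)) hf.integrableOn measurableSet_Ioc hbump
    _ ≤ ∫ y in Ioi 0, y ^ k * exp (-(y - b) ^ 2 / s ^ 2) := by
        have hsub : Ioc (b + s) (b + 2 * s) ⊆ Ioi 0 := fun y hy => hbs.trans hy.1
        refine setIntegral_mono_set hf.integrableOn ?_ hsub.eventuallyLE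
        filter_upwards [ae_restrict_mem measurableSet_Ioi] with y (hy : 0 < y)
        positivity

lemma sq_rpow_div_two {s : ℝ} (hs : 0 ≤ s) (x : ℝ) : (s ^ 2) ^ (x / 2) = s ^ x := by
  rw [← rpow_natCast, ← rpow_mul hs]
  norm_num [mul_div_cancel₀]

theorem stmt_7 (k : ℕ) :
    ∃ c C : ℝ, 0 < c ∧ 0 < C ∧
      ∀ b t : ℝ, 0 ≤ b → 0 < t →
        c * (t ^ ((1 : ℝ)/2) * (t ^ ((k : ℝ)/2) + b^k)) ≤
          (∫ y in Set.Ioi (0 : ℝ), y^k * Real.exp (-(y - b)^2 / t)) ∧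
        (∫ y in Set.Ioi (0 : ℝ), y^k * Real.exp (-(y - b)^2 / t)) ≤
          C * (t ^ ((1 : ℝ)/2) * (t ^ ((k : ℝ)/2) + b^k)) := by
  refine ⟨exp (-4) / 2, ∫ v, polyGaussian k v, by positivity, integral_polyGaussian_pos k, ?_⟩
  intro b t hb ht
  obtain ⟨s, hs, rfl⟩ : ∃ s, 0 < s ∧ s ^ 2 = t := ⟨√t, by positivity, sq_sqrt ht.le⟩
  rw [sq_rpow_div_two hs.le, sq_rpow_div_two hs.le, rpow_one, rpow_natCast]
  exact ⟨le_setIntegral_pow_mul_exp k hb hs, setIntegral_pow_mul_exp_le k hb hs⟩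
end

section
/- For every natural number k there exist positive constants c, C such that for all γ ≥ 0, c · e^{-γ²}/(γ^{k+1} + 1) ≤ ∫₀^∞ x^k e^{-(x+γ)²} dx ≤ C · e^{-γ²}/(γ^{k+1} + 1). -/
/-!
Since `x ^ 2 - x + 1 ≥ 0`, the Gaussian factor `e ^ (-(x + γ) ^ 2)` is at most
`e ^ (1 - γ ^ 2) e ^ (-(1 + γ) x)`, whose `k`-th moment is `k! / (1 + γ) ^ (k + 1)`. Conversely, on
`(0, 1 / (1 + γ))` we have `(x + γ) ^ 2 ≤ γ ^ 2 + 2`, so the integral is at least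
`e ^ (-(γ ^ 2 + 2)) / ((k + 1) (1 + γ) ^ (k + 1))`. Both bounds are of order
`e ^ (-γ ^ 2) / (1 + γ) ^ (k + 1)`, and `(1 + γ) ^ (k + 1)` is comparable to `γ ^ (k + 1) + 1`.
-/

open MeasureTheory Real Set
open scoped Nat

lemma exp_neg_add_sq_le {x γ : ℝ} (hx : 0 ≤ x) (hγ : 0 ≤ γ) :
    exp (-(x + γ) ^ 2) ≤ exp (1 - γ ^ 2) * exp (-((1 + γ) * x)) := by
  rw [← exp_add, exp_le_exp]
  nlinarith [sq_nonneg (x - 1), mul_nonneg hx hγ]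

lemma exp_neg_add_sq_ge {x γ : ℝ} (hx : 0 ≤ x) (hγ : 0 ≤ γ) (hxγ : (1 + γ) * x ≤ 1) :
    exp (-(γ ^ 2 + 2)) ≤ exp (-(x + γ) ^ 2) := by
  rw [exp_le_exp]
  nlinarith [mul_nonneg hx hγ]

section GaussianMoment

variable (k : ℕ) {γ : ℝ}

lemma integrableOn_pow_mul_exp_neg_add_sq (hγ : 0 ≤ γ) :
    IntegrableOn (fun x : ℝ => x ^ k * exp (-(x + γ) ^ 2)) (Ioi 0) := by
  refine ((integrableOn_pow_mul_exp_neg_mul_Ioi k (by positivity : 0 < 1 + γ)).const_mul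
    (exp (1 - γ ^ 2))).mono' (by fun_prop) ?_
  filter_upwards [ae_restrict_mem measurableSet_Ioi] with x (hx : 0 < x)
  rw [norm_of_nonneg (by positivity), mul_left_comm]
  gcongr
  exact exp_neg_add_sq_le hx.le hγ

lemma integral_pow_mul_exp_neg_add_sq_le (hγ : 0 ≤ γ) :
    ∫ x in Ioi (0 : ℝ), x ^ k * exp (-(x + γ) ^ 2) ≤ exp (1 - γ ^ 2) * (k ! / (1 + γ) ^ (k + 1)) :=
  calc ∫ x in Ioi (0 : ℝ), x ^ k * exp (-(x + γ) ^ 2)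
      ≤ ∫ x in Ioi (0 : ℝ), exp (1 - γ ^ 2) * (x ^ k * exp (-((1 + γ) * x))) := by
        refine setIntegral_mono_on (integrableOn_pow_mul_exp_neg_add_sq k hγ)
          ((integrableOn_pow_mul_exp_neg_mul_Ioi k (by positivity)).const_mul _)
          measurableSet_Ioi fun x (hx : 0 < x) => ?_
        rw [mul_left_comm]
        gcongr
        exact exp_neg_add_sq_le hx.le hγ
    _ = exp (1 - γ ^ 2) * (k ! / (1 + γ) ^ (k + 1)) := by
        rw [integral_const_mul, integral_pow_mul_exp_neg_mul_Ioi k (by positivity)]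

lemma le_integral_pow_mul_exp_neg_add_sq (hγ : 0 ≤ γ) :
    exp (-(γ ^ 2 + 2)) / ((k + 1) * (1 + γ) ^ (k + 1)) ≤
      ∫ x in Ioi (0 : ℝ), x ^ k * exp (-(x + γ) ^ 2) := by
  set t := (1 + γ)⁻¹
  have ht : 0 ≤ t := by positivity
  calc exp (-(γ ^ 2 + 2)) / ((k + 1) * (1 + γ) ^ (k + 1))
      = ∫ x in (0 : ℝ)..t, exp (-(γ ^ 2 + 2)) * x ^ k := by
        rw [intervalIntegral.integral_const_mul, integral_pow, inv_pow]
        field_simp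
        simp
    _ ≤ ∫ x in Ioc 0 t, x ^ k * exp (-(x + γ) ^ 2) := by
        rw [intervalIntegral.integral_of_le ht]
        refine setIntegral_mono_on (Continuous.integrableOn_Ioc (by fun_prop))
          ((integrableOn_pow_mul_exp_neg_add_sq k hγ).mono_set Ioc_subset_Ioi_self)
          measurableSet_Ioc fun x ⟨hx, hxt⟩ => ?_
        rw [mul_comm]
        refine mul_le_mul_of_nonneg_left (exp_neg_add_sq_ge hx.le hγ ?_) (by positivity)
        exact (le_inv_mul_iff₀ (by positivity)).mp (by rwa [mul_one])
    _ ≤ ∫ x in Ioi 0, x ^ k * exp (-(x + γ) ^ 2) := by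
        refine setIntegral_mono_set (integrableOn_pow_mul_exp_neg_add_sq k hγ) ?_
          Ioc_subset_Ioi_self.eventuallyLE
        filter_upwards [ae_restrict_mem measurableSet_Ioi] with x (hx : 0 < x)
        positivity

end GaussianMoment

theorem stmt_8 (k : ℕ) :
    ∃ c C : ℝ, 0 < c ∧ 0 < C ∧
      ∀ γ : ℝ, 0 ≤ γ →
        c * (Real.exp (-γ^2) / (γ^(k+1) + 1)) ≤
          (∫ x in Set.Ioi (0 : ℝ), x^k * Real.exp (-(x + γ)^2)) ∧
        (∫ x in Set.Ioi (0 : ℝ), x^k * Real.exp (-(x + γ)^2)) ≤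
          C * (Real.exp (-γ^2) / (γ^(k+1) + 1)) := by
  refine ⟨exp (-2) / ((k + 1) * 2 ^ k), exp 1 * k !, by positivity, by positivity,
    fun γ hγ => ⟨?_, ?_⟩⟩
  · have hpow : (1 + γ) ^ (k + 1) ≤ 2 ^ k * (γ ^ (k + 1) + 1) := by
      simpa [add_comm] using add_pow_le zero_le_one hγ (k + 1)
    calc exp (-2) / ((k + 1) * 2 ^ k) * (exp (-γ ^ 2) / (γ ^ (k + 1) + 1))
        = exp (-(γ ^ 2 + 2)) / ((k + 1) * (2 ^ k * (γ ^ (k + 1) + 1))) := by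
          rw [neg_add, exp_add]; field_simp
      _ ≤ exp (-(γ ^ 2 + 2)) / ((k + 1) * (1 + γ) ^ (k + 1)) := by gcongr
      _ ≤ _ := le_integral_pow_mul_exp_neg_add_sq k hγ
  · have hpow : γ ^ (k + 1) + 1 ≤ (1 + γ) ^ (k + 1) := by
      simpa [add_comm] using pow_add_pow_le zero_le_one hγ k.succ_ne_zero
    calc _ ≤ exp (1 - γ ^ 2) * (k ! / (1 + γ) ^ (k + 1)) :=
          integral_pow_mul_exp_neg_add_sq_le k hγ
      _ = exp 1 * k ! * (exp (-γ ^ 2) / (1 + γ) ^ (k + 1)) := by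
          rw [sub_eq_add_neg, exp_add]; ring
      _ ≤ _ := by gcongr
end

section
/- For all real r > 0 and all real y with -r² < y < 4r², the inequality (r² + y)^{3/2} ≥ r³ + 3ry/2 + y²/(4r) holds. -/
/-!
Put `u = √(r² + y)`, so `y = u² - r²`. Multiplied by `4r`, the inequality becomes
`4ru³ ≥ u⁴ + 4r²u² - r⁴`, and the difference of the two sides factors as
`(u - r)² (2r² - (u - r)²)`. Since `0 < u < √5 r`, we have `(u - r)² ≤ 2r²`, so it is nonnegative.
-/

open Real

lemma quartic_le_four_mul_mul_cube {r u : ℝ} (h : (u - r) ^ 2 ≤ 2 * r ^ 2) :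
    u ^ 4 + 4 * r ^ 2 * u ^ 2 - r ^ 4 ≤ 4 * r * u ^ 3 := by
  have hfactor : 4 * r * u ^ 3 - (u ^ 4 + 4 * r ^ 2 * u ^ 2 - r ^ 4)
      = (u - r) ^ 2 * (2 * r ^ 2 - (u - r) ^ 2) := by ring
  linarith [mul_nonneg (sq_nonneg (u - r)) (sub_nonneg.mpr h)]

theorem stmt_10 (r y : ℝ) (hr : 0 < r) (hy1 : -r^2 < y) (hy2 : y < 4*r^2) :
    (r^2 + y) ^ ((3 : ℝ)/2) ≥ r^3 + 3*r*y/2 + y^2/(4*r) := by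
  have hs : 0 ≤ r ^ 2 + y := by linarith
  set u := √(r ^ 2 + y) with hu
  have hu0 : 0 < u := sqrt_pos.mpr (by linarith)
  have hy : y = u ^ 2 - r ^ 2 := by rw [hu, sq_sqrt hs]; ring
  have hu_sq : u ^ 2 < 5 * r ^ 2 := by linarith
  have hdist : (u - r) ^ 2 ≤ 2 * r ^ 2 := by nlinarith
  have hpow : (r ^ 2 + y) ^ ((3 : ℝ) / 2) = u ^ 3 := by
    rw [rpow_div_two_eq_sqrt 3 hs, ← hu]; norm_cast
  have hrhs : r ^ 3 + 3 * r * y / 2 + y ^ 2 / (4 * r)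
      = (u ^ 4 + 4 * r ^ 2 * u ^ 2 - r ^ 4) / (4 * r) := by
    rw [hy]; field_simp; ring
  rw [ge_iff_le, hpow, hrhs, div_le_iff₀ (by positivity)]
  linarith [quartic_le_four_mul_mul_cube hdist]
end

section
/- Fix μ > 0 and t > 0. The function z ↦ z/(z + μ(1 − e^{-zt})) is monotone increasing on (0, ∞). -/
/-! Writing `g x = (1 - exp (-x)) / x`, for `z > 0` the function equals `1 / (1 + μ t g (z t))`.
Now `g x` is the slope of the chord of the convex function `exp` between `-x` and `0`, so `g`
decreases, and the function increases. -/

open Real Set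

lemma antitoneOn_one_sub_exp_neg_div : AntitoneOn (fun x : ℝ => (1 - exp (-x)) / x) {0}ᶜ := by
  intro x hx y hy hxy
  have := convexOn_exp.secant_mono (a := 0) (mem_univ _) (mem_univ (-y)) (mem_univ (-x))
    (neg_ne_zero.2 hy) (neg_ne_zero.2 hx) (neg_le_neg hxy)
  simpa only [exp_zero, sub_zero, ← neg_sub (1 : ℝ), neg_div_neg_eq] using this

lemma one_sub_exp_neg_div_pos {x : ℝ} (hx : 0 < x) : 0 < (1 - exp (-x)) / x :=
  div_pos (sub_pos.2 (exp_lt_one_iff.2 (neg_neg_of_pos hx))) hx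

theorem stmt_11 (μ t : ℝ) (hμ : 0 < μ) (ht : 0 < t) :
    MonotoneOn (fun z : ℝ => z / (z + μ * (1 - Real.exp (-z * t)))) (Set.Ioi 0) := by
  set g : ℝ → ℝ := fun x => (1 - exp (-x)) / x
  have hform : ∀ z > 0, z / (z + μ * (1 - exp (-z * t))) = 1 / (1 + μ * t * g (z * t)) := by
    intro z hz
    simp only [g, neg_mul]
    field_simp
  intro a ha b hb hab
  simp only [hform a ha, hform b hb]
  have hg : g (b * t) ≤ g (a * t) :=
    antitoneOn_one_sub_exp_neg_div (mul_pos ha ht).ne' (mul_pos hb ht).ne'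
      (mul_le_mul_of_nonneg_right hab ht.le)
  have hg_pos := one_sub_exp_neg_div_pos (mul_pos hb ht)
  gcongr
end

section
/- Assume the asymptotic Ai(z) ~ (2√π z^{1/4})^{-1} e^{-(2/3)z^{3/2}} as z → ∞ for the Airy function Ai. Then lim_{r→∞} e^{-r³/3} ∫_{γ_1}^∞ e^{rz} Ai(z) dz = 1, where γ_1 < 0 is the largest zero of Ai. -/
/-!
The substitution `z = (r + t / √r) ^ 2` centres the integrand at the maximum `z = r ^ 2` of
`r z - (2/3) z ^ (3/2)`, where this exponent equals `r ^ 3 / 3`, and turns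
`e ^ (-r ^ 3 / 3) e ^ (r z)` times the leading term of the asymptotic into `(√π)⁻¹` times
`√(1 + ε t) e ^ (-t ^ 2 - (2/3) ε t ^ 3)` with `ε = r ^ (-3/2)`. Dominated convergence against
`e ^ (-t ^ 2 / 6)` sends this to the Gaussian integral, so the weighted integral of the leading
term tends to `1`. Beyond some `A`, `Ai` is within a factor `1 ± ε` of the leading term, and
the contribution of `(γ₁, A]` is `O(e ^ (r A - r ^ 3 / 3)) → 0`.
-/

open Real Filter MeasureTheory Set Topology

noncomputable def airyLeading (z : ℝ) : ℝ :=
  exp (-(2 / 3) * z ^ ((3:ℝ) / 2)) / (2 * √π * z ^ ((1:ℝ) / 4))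

lemma airyLeading_pos {z : ℝ} (hz : 0 < z) : 0 < airyLeading z := by
  have := rpow_pos_of_pos hz (1 / 4)
  unfold airyLeading; positivity

lemma airyLeading_sq {u : ℝ} (hu : 0 < u) :
    airyLeading (u ^ 2) = exp (-(2 / 3) * u ^ 3) / (2 * √π * √u) := by
  rw [airyLeading, ← rpow_natCast u 2, ← rpow_mul hu.le, ← rpow_mul hu.le, sqrt_eq_rpow u,
    ← rpow_natCast u 3]
  norm_num

noncomputable def airySubst (r t : ℝ) : ℝ := (r + t / √r) ^ 2

lemma sqrt_lt_add_div_sqrt {r A t : ℝ} (hr : 0 < r) (ht : √r * (√A - r) < t) :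
    √A < r + t / √r := by
  have : √A - r < t / √r := by rw [lt_div_iff₀ (sqrt_pos.2 hr), mul_comm]; exact ht
  linarith

lemma hasDerivAt_airySubst (r t : ℝ) :
    HasDerivAt (airySubst r) (2 * (r + t / √r) / √r) t := by
  have h := (((hasDerivAt_id' t).div_const √r).const_add r).fun_pow 2
  exact h.congr_deriv (by push_cast; ring)

lemma strictMonoOn_airySubst {r A : ℝ} (hr : 0 < r) :
    StrictMonoOn (airySubst r) (Ioi (√r * (√A - r))) := fun s hs t _ hst =>
  pow_lt_pow_left₀ (by gcongr)
    ((sqrt_nonneg A).trans (sqrt_lt_add_div_sqrt hr hs).le) two_ne_zero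

lemma image_airySubst {r A : ℝ} (hr : 0 < r) (hA : 0 ≤ A) :
    airySubst r '' Ioi (√r * (√A - r)) = Ioi A := by
  ext z
  constructor
  · rintro ⟨t, ht, rfl⟩
    rw [mem_Ioi, airySubst, ← sq_sqrt hA]
    exact pow_lt_pow_left₀ (sqrt_lt_add_div_sqrt hr ht) (sqrt_nonneg A) two_ne_zero
  · intro (hz : A < z)
    have hw := sqrt_pos.2 hr
    refine ⟨√r * (√z - r), mul_lt_mul_of_pos_left (by gcongr) hw, ?_⟩
    rw [airySubst, mul_div_cancel_left₀ _ hw.ne', add_sub_cancel, sq_sqrt (hA.trans hz.le)]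

noncomputable def airyKernel (ε t : ℝ) : ℝ :=
  √(1 + ε * t) * exp (-(t ^ 2 + 2 / 3 * ε * t ^ 3))

lemma airyKernel_nonneg (ε t : ℝ) : 0 ≤ airyKernel ε t := by
  unfold airyKernel; positivity

lemma continuous_airyKernel (ε : ℝ) : Continuous (airyKernel ε) := by
  unfold airyKernel; fun_prop

lemma tendsto_airyKernel_zero (t : ℝ) :
    Tendsto (fun ε => airyKernel ε t) (𝓝 0) (𝓝 (exp (-t ^ 2))) := by
  have h : Continuous fun ε => airyKernel ε t := by unfold airyKernel; fun_prop
  simpa [airyKernel] using h.tendsto 0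

lemma airyKernel_le {ε t : ℝ} (hε₀ : 0 ≤ ε) (hε₁ : ε ≤ 1) (ht : -1 ≤ ε * t) :
    airyKernel ε t ≤ exp 1 * exp (-(1 / 6) * t ^ 2) := by
  have hεt : ε * t ≤ |t| := by
    calc ε * t ≤ |ε * t| := le_abs_self _
      _ = ε * |t| := by rw [abs_mul, abs_of_nonneg hε₀]
      _ ≤ |t| := mul_le_of_le_one_left (abs_nonneg t) hε₁
  have hsqrt : √(1 + ε * t) ≤ exp (|t| / 2) := by
    rw [sqrt_le_left (by positivity), sq, ← exp_add, add_halves]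
    linarith [add_one_le_exp |t|]
  have hcubic : t ^ 2 / 3 ≤ t ^ 2 + 2 / 3 * ε * t ^ 3 := by
    nlinarith [sq_nonneg t]
  calc airyKernel ε t ≤ exp (|t| / 2) * exp (-(t ^ 2 / 3)) :=
        mul_le_mul hsqrt (exp_le_exp.2 (by linarith)) (exp_pos _).le (exp_pos _).le
    _ ≤ exp (1 + -(1 / 6) * t ^ 2) := by
        rw [← exp_add]
        exact exp_le_exp.2 (by nlinarith [sq_nonneg (|t| - 3 / 2), sq_abs t])
    _ = exp 1 * exp (-(1 / 6) * t ^ 2) := exp_add _ _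

lemma abs_deriv_mul_airyIntegrand {r t : ℝ} (hr : 0 < r) (ht : 0 < r + t / √r) :
    |2 * (r + t / √r) / √r| * (exp (r * airySubst r t) * airyLeading (airySubst r t)) =
      exp (r ^ 3 / 3) / √π * airyKernel ((r * √r)⁻¹) t := by
  rw [airySubst, airyLeading_sq ht, airyKernel]
  set w := √r with hw_def
  set u := r + t / w with hu
  have hw : 0 < w := sqrt_pos.2 hr
  have hwr : w ^ 2 = r := sq_sqrt hr.le
  have hexp : exp (r * u ^ 2) * exp (-(2 / 3) * u ^ 3) =
      exp (r ^ 3 / 3) * exp (-(t ^ 2 + 2 / 3 * ((r * w)⁻¹) * t ^ 3)) := by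
    rw [← exp_add, ← exp_add, hu, ← hwr]
    congr 1
    field_simp
    ring
  have hsqrt : √(1 + (r * w)⁻¹ * t) = √u / w := by
    rw [show 1 + (r * w)⁻¹ * t = u / w ^ 2 by rw [hu, hwr]; field_simp, sqrt_div ht.le,
      sqrt_sq hw.le]
  have hsu : 0 < √u := sqrt_pos.2 ht
  rw [hsqrt, abs_of_pos (by positivity)]
  have hπ : 0 < √π := sqrt_pos.2 pi_pos
  calc 2 * u / w * (exp (r * u ^ 2) * (exp (-(2 / 3) * u ^ 3) / (2 * √π * √u)))
      = 2 * u / w / (2 * √π * √u) * (exp (r * u ^ 2) * exp (-(2 / 3) * u ^ 3)) := by ring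
    _ = √u / w / √π * (exp (r ^ 3 / 3) * exp (-(t ^ 2 + 2 / 3 * ((r * w)⁻¹) * t ^ 3))) := by
        rw [hexp]
        field_simp
        exact (sq_sqrt ht.le).symm
    _ = _ := by ring

lemma eqOn_abs_deriv_mul_airyIntegrand {r A : ℝ} (hr : 0 < r) :
    EqOn
      (fun t => |2 * (r + t / √r) / √r| • (exp (r * airySubst r t) * airyLeading (airySubst r t)))
      (fun t => exp (r ^ 3 / 3) / √π * airyKernel (r * √r)⁻¹ t) (Ioi (√r * (√A - r))) :=
  fun _ ht => abs_deriv_mul_airyIntegrand hr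
    ((sqrt_nonneg A).trans_lt (sqrt_lt_add_div_sqrt hr ht))

lemma integrableOn_airyIntegrand_iff {r A : ℝ} (hr : 0 < r) (hA : 0 ≤ A) :
    IntegrableOn (fun z => exp (r * z) * airyLeading z) (Ioi A) ↔
      IntegrableOn (airyKernel (r * √r)⁻¹) (Ioi (√r * (√A - r))) := by
  rw [← image_airySubst hr hA, integrableOn_image_iff_integrableOn_abs_deriv_smul measurableSet_Ioi
    (fun t _ => (hasDerivAt_airySubst r t).hasDerivWithinAt) (strictMonoOn_airySubst hr).injOn,
    integrableOn_congr_fun (eqOn_abs_deriv_mul_airyIntegrand hr) measurableSet_Ioi]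
  exact integrable_const_mul_iff (by positivity : (0:ℝ) < _).ne'.isUnit _

lemma exp_mul_setIntegral_airyIntegrand {r A : ℝ} (hr : 0 < r) (hA : 0 ≤ A) :
    exp (-r ^ 3 / 3) * ∫ z in Ioi A, exp (r * z) * airyLeading z =
      (√π)⁻¹ * ∫ t in Ioi (√r * (√A - r)), airyKernel (r * √r)⁻¹ t := by
  rw [← image_airySubst hr hA, integral_image_eq_integral_abs_deriv_smul measurableSet_Ioi
    (fun t _ => (hasDerivAt_airySubst r t).hasDerivWithinAt) (strictMonoOn_airySubst hr).injOn,
    setIntegral_congr_fun measurableSet_Ioi (eqOn_abs_deriv_mul_airyIntegrand hr),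
    integral_const_mul, ← mul_assoc, mul_div_assoc', ← exp_add, neg_div, neg_add_cancel, exp_zero,
    one_div]

lemma airyKernel_le_of_lt {r A t : ℝ} (hr : 1 ≤ r) (ht : √r * (√A - r) < t) :
    airyKernel (r * √r)⁻¹ t ≤ exp 1 * exp (-(1 / 6) * t ^ 2) := by
  have hr₀ : 0 < r := one_pos.trans_le hr
  have hs : 1 ≤ r * √r := one_le_mul_of_one_le_of_one_le hr (one_le_sqrt.2 hr)
  refine airyKernel_le (by positivity) (inv_le_one_of_one_le₀ hs) ?_
  have h := sqrt_lt_add_div_sqrt hr₀ ht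
  have : -r < t / √r := by linarith [sqrt_nonneg A]
  rw [← div_eq_inv_mul, mul_comm, ← div_div, le_div_iff₀ hr₀]
  linarith

lemma integrableOn_airyIntegrand {r A : ℝ} (hr : 1 ≤ r) (hA : 0 ≤ A) :
    IntegrableOn (fun z => exp (r * z) * airyLeading z) (Ioi A) := by
  refine (integrableOn_airyIntegrand_iff (one_pos.trans_le hr) hA).2 ?_
  refine Integrable.mono' ((integrable_exp_neg_mul_sq (by norm_num : (0:ℝ) < 1 / 6)).const_mul
    (exp 1)).integrableOn (continuous_airyKernel _).aestronglyMeasurable ?_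
  refine (ae_restrict_iff' measurableSet_Ioi).2 (ae_of_all _ fun t ht => ?_)
  rw [norm_of_nonneg (airyKernel_nonneg _ t)]
  exact airyKernel_le_of_lt hr ht

lemma tendsto_setIntegral_airyKernel (A : ℝ) :
    Tendsto (fun r => ∫ t in Ioi (√r * (√A - r)), airyKernel (r * √r)⁻¹ t) atTop (𝓝 √π) := by
  have hgauss : ∫ t, exp (-t ^ 2) = √π := by simpa using integral_gaussian 1
  simp_rw [← integral_indicator measurableSet_Ioi, ← hgauss]
  refine tendsto_integral_filter_of_dominated_convergence
    (fun t => exp 1 * exp (-(1 / 6) * t ^ 2)) (Eventually.of_forall fun r =>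
      (continuous_airyKernel _).aestronglyMeasurable.indicator measurableSet_Ioi) ?_
    ((integrable_exp_neg_mul_sq (by norm_num : (0:ℝ) < 1 / 6)).const_mul _) (ae_of_all _ ?_)
  · filter_upwards [eventually_ge_atTop 1] with r hr
    refine ae_of_all _ fun t => ?_
    by_cases ht : t ∈ Ioi (√r * (√A - r))
    · rw [indicator_of_mem ht, norm_of_nonneg (airyKernel_nonneg _ t)]
      exact airyKernel_le_of_lt hr ht
    · rw [indicator_of_notMem ht, norm_zero]
      positivity
  · intro t
    have hscale : Tendsto (fun r : ℝ => (r * √r)⁻¹) atTop (𝓝 0) :=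
      tendsto_inv_atTop_zero.comp (tendsto_id.atTop_mul_atTop₀ tendsto_sqrt_atTop)
    have hleft : Tendsto (fun r : ℝ => √r * (√A - r)) atTop atBot :=
      tendsto_sqrt_atTop.atTop_mul_atBot₀
        (tendsto_atBot_add_const_left _ _ tendsto_neg_atTop_atBot)
    refine ((tendsto_airyKernel_zero t).comp hscale).congr' ?_
    filter_upwards [hleft.eventually_lt_atBot t] with r hr
    exact (indicator_of_mem hr _).symm

lemma tendsto_exp_mul_setIntegral_airyIntegrand {A : ℝ} (hA : 0 ≤ A) :
    Tendsto (fun r => exp (-r ^ 3 / 3) * ∫ z in Ioi A, exp (r * z) * airyLeading z)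
      atTop (𝓝 1) := by
  have h := (tendsto_setIntegral_airyKernel A).const_mul (√π)⁻¹
  rw [inv_mul_cancel₀ (sqrt_pos.2 pi_pos).ne'] at h
  refine h.congr' ?_
  filter_upwards [eventually_gt_atTop 0] with r hr
  exact (exp_mul_setIntegral_airyIntegrand hr hA).symm

lemma tendsto_exp_mul_setIntegral_Ioc {f : ℝ → ℝ} {a b : ℝ} (hf : IntegrableOn f (Ioc a b)) :
    Tendsto (fun r => exp (-r ^ 3 / 3) * ∫ z in Ioc a b, exp (r * z) * f z) atTop (𝓝 0) := by
  have hexponent : Tendsto (fun r : ℝ => r * (b + -(r ^ 2 / 3))) atTop atBot :=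
    tendsto_id.atTop_mul_atBot₀ (tendsto_const_nhds.add_atBot (tendsto_neg_atTop_atBot.comp
      ((tendsto_pow_atTop two_ne_zero).atTop_div_const (by norm_num))))
  have hbound := (tendsto_exp_atBot.comp hexponent).const_mul (∫ z in Ioc a b, |f z|)
  rw [mul_zero] at hbound
  refine squeeze_zero_norm' ?_ hbound
  filter_upwards [eventually_ge_atTop 0] with r hr
  have hint : ‖∫ z in Ioc a b, exp (r * z) * f z‖ ≤ ∫ z in Ioc a b, exp (r * b) * |f z| := by
    refine norm_integral_le_of_norm_le (hf.norm.const_mul _) ?_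
    refine (ae_restrict_iff' measurableSet_Ioc).2 (ae_of_all _ fun z hz => ?_)
    rw [norm_mul, norm_of_nonneg (exp_pos _).le, norm_eq_abs]
    gcongr
    exact hz.2
  calc ‖exp (-r ^ 3 / 3) * ∫ z in Ioc a b, exp (r * z) * f z‖
      ≤ exp (-r ^ 3 / 3) * ∫ z in Ioc a b, exp (r * b) * |f z| := by
        rw [norm_mul, norm_of_nonneg (exp_pos _).le]
        gcongr
    _ = (∫ z in Ioc a b, |f z|) * exp (r * (b + -(r ^ 2 / 3))) := by
        rw [integral_const_mul, ← mul_assoc, ← exp_add, mul_comm]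
        ring_nf

lemma integrableOn_and_abs_setIntegral_sub_le {α : Type*} [MeasurableSpace α] {μ : Measure α}
    {f g : α → ℝ} {s : Set α} {ε : ℝ} (hs : MeasurableSet s) (hg : IntegrableOn g s μ)
    (hf : AEStronglyMeasurable f (μ.restrict s)) (hfg : ∀ z ∈ s, |f z - g z| ≤ ε * g z) :
    IntegrableOn f s μ ∧ |∫ z in s, f z ∂μ - ∫ z in s, g z ∂μ| ≤ ε * ∫ z in s, g z ∂μ := by
  have hle : ∀ᵐ z ∂μ.restrict s, ‖f z - g z‖ ≤ ε * g z :=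
    (ae_restrict_iff' hs).2 (ae_of_all _ hfg)
  have hdiff : IntegrableOn (fun z => f z - g z) s μ :=
    Integrable.mono' (hg.const_mul ε) (hf.sub hg.aestronglyMeasurable) hle
  have hfint : IntegrableOn f s μ :=
    (hdiff.add hg).congr (ae_of_all _ fun z => sub_add_cancel (f z) (g z))
  refine ⟨hfint, ?_⟩
  rw [← integral_sub hfint hg, ← integral_const_mul]
  simpa using norm_integral_le_of_norm_le (hg.const_mul ε) hle

lemma abs_sub_airyLeading_le {x z ε : ℝ} (hz : 0 < z)
    (h : |x * (2 * √π * z ^ ((1:ℝ) / 4)) * exp (2 / 3 * z ^ ((3:ℝ) / 2)) - 1| ≤ ε) :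
    |x - airyLeading z| ≤ ε * airyLeading z := by
  have hL := airyLeading_pos hz
  have hratio : x * (2 * √π * z ^ ((1:ℝ) / 4)) * exp (2 / 3 * z ^ ((3:ℝ) / 2)) =
      x / airyLeading z := by
    rw [airyLeading, neg_mul, exp_neg, div_div_eq_mul_div, div_inv_eq_mul]
  rwa [hratio, div_sub_one hL.ne', abs_div, abs_of_pos hL, div_le_iff₀ hL] at h

lemma eventually_abs_exp_mul_setIntegral_Ioi_sub_one_lt {f : ℝ → ℝ}
    (hf : AEStronglyMeasurable f) {B ε : ℝ} (hB : 0 ≤ B) (hε₀ : 0 < ε) (hε₁ : ε ≤ 1)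
    (hclose : ∀ z ∈ Ioi B, |f z - airyLeading z| ≤ ε * airyLeading z) :
    ∀ᶠ r in atTop, IntegrableOn (fun z => exp (r * z) * f z) (Ioi B) ∧
      |exp (-r ^ 3 / 3) * (∫ z in Ioi B, exp (r * z) * f z) - 1| < 3 * ε := by
  filter_upwards [eventually_ge_atTop 1, Metric.tendsto_nhds.1
    (tendsto_exp_mul_setIntegral_airyIntegrand hB) ε hε₀] with r hr hlead
  have hexp : ∀ z, 0 < exp (r * z) := fun z => exp_pos _
  obtain ⟨hint, hdiff⟩ := integrableOn_and_abs_setIntegral_sub_le (f := fun z => exp (r * z) * f z)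
    measurableSet_Ioi (integrableOn_airyIntegrand hr hB)
    ((continuous_exp.comp (continuous_const_mul r)).aestronglyMeasurable.mul hf).restrict
    fun z hz => by
      rw [← mul_sub, abs_mul, abs_of_pos (hexp z), mul_left_comm]
      exact mul_le_mul_of_nonneg_left (hclose z hz) (hexp z).le
  refine ⟨hint, ?_⟩
  set I := ∫ z in Ioi B, exp (r * z) * f z
  set J := ∫ z in Ioi B, exp (r * z) * airyLeading z
  rw [dist_eq] at hlead
  have he := exp_pos (-r ^ 3 / 3)
  have hscaled : |exp (-r ^ 3 / 3) * I - exp (-r ^ 3 / 3) * J| ≤ ε * (exp (-r ^ 3 / 3) * J) := by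
    rw [← mul_sub, abs_mul, abs_of_pos he, mul_left_comm]
    exact mul_le_mul_of_nonneg_left hdiff he.le
  have hJ : exp (-r ^ 3 / 3) * J < 2 := by linarith [(abs_lt.1 hlead).2]
  refine (abs_sub_le _ (exp (-r ^ 3 / 3) * J) 1).trans_lt ?_
  nlinarith

theorem tendsto_exp_mul_setIntegral_of_airy_asymptotic {f : ℝ → ℝ} (hf : LocallyIntegrable f)
    (hasymp : Tendsto (fun z => f z * (2 * √π * z ^ ((1:ℝ) / 4)) * exp (2 / 3 * z ^ ((3:ℝ) / 2)))
      atTop (𝓝 1)) (a : ℝ) :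
    Tendsto (fun r => exp (-r ^ 3 / 3) * ∫ z in Ioi a, exp (r * z) * f z) atTop (𝓝 1) := by
  rw [Metric.tendsto_nhds]
  intro δ hδ
  set ε := min 1 (δ / 4)
  have hε₀ : 0 < ε := lt_min one_pos (by positivity)
  obtain ⟨A, hA⟩ := eventually_atTop.1 (Metric.tendsto_nhds.1 hasymp ε hε₀)
  set B := max A (max a 1)
  have haB : a ≤ B := (le_max_left a 1).trans (le_max_right _ _)
  have hB : 0 ≤ B := zero_le_one.trans ((le_max_right a 1).trans (le_max_right _ _))
  have hclose : ∀ z ∈ Ioi B, |f z - airyLeading z| ≤ ε * airyLeading z := fun z (hz : B < z) =>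
    abs_sub_airyLeading_le (hB.trans_lt hz) (hA z ((le_max_left _ _).trans hz.le)).le
  have hfIoc : IntegrableOn f (Ioc a B) :=
    (hf.integrableOn_isCompact isCompact_Icc).mono_set Ioc_subset_Icc_self
  filter_upwards [Metric.tendsto_nhds.1 (tendsto_exp_mul_setIntegral_Ioc hfIoc) ε hε₀,
    eventually_abs_exp_mul_setIntegral_Ioi_sub_one_lt hf.aestronglyMeasurable hB hε₀
      (min_le_left _ _) hclose] with r hcompact ⟨hint, htail⟩
  have hintIoc : IntegrableOn (fun z => exp (r * z) * f z) (Ioc a B) :=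
    hfIoc.continuousOn_mul_of_subset (by fun_prop) isCompact_Icc measurableSet_Ioc
      Ioc_subset_Icc_self
  rw [dist_eq, sub_zero] at hcompact
  rw [dist_eq, ← Ioc_union_Ioi_eq_Ioi haB, setIntegral_union (Ioc_disjoint_Ioi le_rfl)
    measurableSet_Ioi hintIoc hint, mul_add, add_sub_assoc]
  have hεδ : ε ≤ δ / 4 := min_le_right _ _
  refine (abs_add_le _ _).trans_lt ((add_lt_add hcompact htail).trans_le ?_)
  linarith

theorem stmt_17_general (Ai : ℝ → ℝ) (γ₁ : ℝ)
    (hcont : Continuous Ai)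
    (hasymp : Tendsto
      (fun z : ℝ => Ai z * (2 * Real.sqrt π * z ^ ((1:ℝ)/4)) *
        Real.exp ((2/3) * z ^ ((3:ℝ)/2))) atTop (nhds 1)) :
    Tendsto (fun r : ℝ =>
        Real.exp (-r^3/3) * ∫ z in Set.Ioi γ₁, Real.exp (r * z) * Ai z)
      atTop (nhds 1) :=
  tendsto_exp_mul_setIntegral_of_airy_asymptotic hcont.locallyIntegrable hasymp γ₁

/-- Given the Airy asymptotic `Ai z ~ (2√π z^{1/4})⁻¹ e^{-(2/3) z^{3/2}}` as
`z → ∞`, together with continuity, boundedness and positivity of `Ai` on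
`(γ₁, ∞)` where `γ₁ < 0` is the largest zero of `Ai`, we have
`lim_{r→∞} e^{-r³/3} ∫_{γ₁}^∞ e^{rz} Ai z dz = 1`. -/
theorem stmt_17 (Ai : ℝ → ℝ) (γ₁ : ℝ) (hγ : γ₁ < 0)
    (hcont : Continuous Ai) (hzero : Ai γ₁ = 0)
    (hpos : ∀ z, γ₁ < z → 0 < Ai z)
    (hbdd : ∃ M : ℝ, ∀ z, |Ai z| ≤ M)
    (hasymp : Tendsto
      (fun z : ℝ => Ai z * (2 * Real.sqrt π * z ^ ((1:ℝ)/4)) *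
        Real.exp ((2/3) * z ^ ((3:ℝ)/2))) atTop (nhds 1)) :
    Tendsto (fun r : ℝ =>
        Real.exp (-r^3/3) * ∫ z in Set.Ioi γ₁, Real.exp (r * z) * Ai z)
      atTop (nhds 1) :=
  stmt_17_general Ai γ₁ hcont hasymp
end
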